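/- arXiv:1301.7597 — 3 statements merged into one kernel-verified Lean document; each statement's English description precedes it below -/
import Mathlib

section
/- Let G be a graph, M a maximum matching of G, and S the set of exposed vertices. A vertex u belongs to A(G) := Γ_G(D(G)) \ D(G) if and only if there is no M-balanced path from u to any vertex of S, while there exists v ∈ S such that there is an M-exposed path between u and v (an M-alternating path with an odd number of edges whose non-matching edges form a perfect matching of the path). -/
open SimpleGraph

variable {V : Type*}

/-- `M` is a matching of `G`, given as a set of edges. -/
def IsMatchingSet (G : SimpleGraph V) (M : Set (Sym2 V)) : Prop :=
  M ⊆ G.edgeSet ∧ ∀ (v : V), ∀ e ∈ M, ∀ f ∈ M, v ∈ e → v ∈ f → e = f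

/-- `M` is a perfect matching of `G`: every vertex lies on exactly one edge of `M`. -/
def IsPerfectMatchingSet (G : SimpleGraph V) (M : Set (Sym2 V)) : Prop :=
  M ⊆ G.edgeSet ∧ ∀ v : V, ∃! e, e ∈ M ∧ v ∈ e

/-- `M` is a maximum matching of `G`. -/
def IsMaximumMatchingSet (G : SimpleGraph V) (M : Set (Sym2 V)) : Prop :=
  IsMatchingSet G M ∧ ∀ M', IsMatchingSet G M' → M'.ncard ≤ M.ncard

/-- `v` is exposed by the matching `M`. -/
def ExposedBy (M : Set (Sym2 V)) (v : V) : Prop := ∀ e ∈ M, v ∉ e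

/-- The Gallai–Edmonds set `D(G)`: vertices missed by some maximum matching. -/
def Dset (G : SimpleGraph V) : Set V :=
  {v | ∃ M, IsMaximumMatchingSet G M ∧ ExposedBy M v}

/-- `A(G) = Γ_G(D(G))`, the neighbors of `D(G)` outside `D(G)`. -/
def Aset (G : SimpleGraph V) : Set V :=
  {v | v ∉ Dset G ∧ ∃ u ∈ Dset G, G.Adj u v}

/-- `C(G) = V(G) \ (D(G) ∪ A(G))`. -/
def Cset (G : SimpleGraph V) : Set V :=
  {v | v ∉ Dset G ∧ v ∉ Aset G}

/-- A graph is factorizable if it has a perfect matching. -/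
def Factorizable (G : SimpleGraph V) : Prop := ∃ M, IsPerfectMatchingSet G M

/-- A walk is `M`-alternating if its edges alternate between `M` and its complement. -/
def IsAltWalk {G : SimpleGraph V} {u v : V} (M : Set (Sym2 V)) (p : G.Walk u v) : Prop :=
  List.Chain' (fun e f => e ∈ M ↔ f ∉ M) p.edges

/-- An `M`-balanced path from `u` to `v`: an even `M`-alternating path whose matching
edges form a near-perfect matching of the path exposing only `v` (first edge is in `M`). -/
def IsBalancedPath {G : SimpleGraph V} {u v : V} (M : Set (Sym2 V)) (p : G.Walk u v) : Prop :=
  p.IsPath ∧ Even p.length ∧ IsAltWalk M p ∧ ∀ e, p.edges.head? = some e → e ∈ M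

/-- An `M`-saturated path: odd `M`-alternating, matching edges perfectly cover the path. -/
def IsSaturatedPath {G : SimpleGraph V} {u v : V} (M : Set (Sym2 V)) (p : G.Walk u v) : Prop :=
  p.IsPath ∧ Odd p.length ∧ IsAltWalk M p ∧ ∀ e, p.edges.head? = some e → e ∈ M

/-- An `M`-exposed path: odd `M`-alternating, non-matching edges perfectly cover the path. -/
def IsExposedPath {G : SimpleGraph V} {u v : V} (M : Set (Sym2 V)) (p : G.Walk u v) : Prop :=
  p.IsPath ∧ Odd p.length ∧ IsAltWalk M p ∧ ∀ e, p.edges.head? = some e → e ∉ M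

/-- The allowed edges of `G`: edges lying in some perfect matching. -/
def allowedEdges (G : SimpleGraph V) : Set (Sym2 V) :=
  {e | ∃ M, IsPerfectMatchingSet G M ∧ e ∈ M}

/-- `u` and `v` lie in the same factor-connected component of `G`. -/
def SameFC (G : SimpleGraph V) (u v : V) : Prop :=
  (SimpleGraph.fromEdgeSet (allowedEdges G)).Reachable u v

/-- `X` is separating: every factor-connected component lies inside `X` or misses `X`. -/
def IsSeparating (G : SimpleGraph V) (X : Set V) : Prop :=
  ∀ u v : V, SameFC G u v → (u ∈ X ↔ v ∈ X)

/-- A factorizable graph `G` is saturated if adding any non-edge strictly increases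
the number of perfect matchings. -/
def Saturated (G : SimpleGraph V) : Prop :=
  Factorizable G ∧ ∀ x y : V, x ≠ y → ¬ G.Adj x y →
    {N | IsPerfectMatchingSet G N}.ncard <
      {N | IsPerfectMatchingSet (G ⊔ SimpleGraph.fromEdgeSet {s(x, y)}) N}.ncard


/-!
`u ∈ D(G)` exactly when an `M`-balanced path runs from `u` to an `M`-exposed vertex. Switching
`M` along such a path moves the exposed vertex to `u`. Conversely, if a maximum matching `N`
misses `u` and `M` matches `u` to `w`, rotating the `N`-edge at `w` onto `u` gives a maximum
matching that is closer to `M` and misses the other end `x` of that edge; by induction a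
balanced path starts at `x`, it avoids `u` and `w` (both are matched only by `uw` in `M` and
in the new matching), and `u w x …` is the required path.

So `u ∈ A(G)` says that no balanced path starts at `u` while one starts at a neighbour `d`.
Prepending `ud` to the path from `d`, or cutting that path at `u` when it passes through `u`,
gives an `M`-exposed path; conversely dropping the first edge of an exposed path leaves a
balanced path from a neighbour.
-/

namespace SimpleGraph.Walk

variable {G : SimpleGraph V}

theorem IsPath.exists_ne_mem_edges_of_mem_support {a b y : V} {q : G.Walk a b} (hq : q.IsPath)
    (hy : y ∈ q.support) (hya : y ≠ a) (hyb : y ≠ b) :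
    ∃ e₁ ∈ q.edges, ∃ e₂ ∈ q.edges, e₁ ≠ e₂ ∧ y ∈ e₁ ∧ y ∈ e₂ := by
  induction q with
  | nil => exact absurd (List.mem_singleton.mp hy) hya
  | @cons a c b h q ih =>
    rw [cons_isPath_iff] at hq
    rw [support_cons, List.mem_cons] at hy
    rcases hy with rfl | hy
    · exact absurd rfl hya
    by_cases hyc : y = c
    · subst hyc
      cases q with
      | nil => exact absurd rfl hyb
      | @cons _ d _ h' r =>
        refine ⟨s(a, y), by simp, s(y, d), by simp, fun heq => ?_, by simp, by simp⟩
        rcases Sym2.eq_iff.mp heq with ⟨rfl, -⟩ | ⟨rfl, -⟩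
        · exact h.ne rfl
        · exact hq.2 (by simp)
    · obtain ⟨e₁, he₁, e₂, he₂, hne, hy₁, hy₂⟩ := ih hq.1 hy hyc hyb
      exact ⟨e₁, by simp [he₁], e₂, by simp [he₂], hne, hy₁, hy₂⟩

end SimpleGraph.Walk

variable {G : SimpleGraph V} {M N : Set (Sym2 V)}

namespace IsMatchingSet

theorem mono (hN : IsMatchingSet G N) (h : M ⊆ N) : IsMatchingSet G M :=
  ⟨h.trans hN.1, fun y e he f hf => hN.2 y e (h he) f (h hf)⟩

theorem insert_of_exposedBy (hN : IsMatchingSet G N) {a : Sym2 V} (ha : a ∈ G.edgeSet)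
    (hexp : ∀ y ∈ a, ExposedBy N y) : IsMatchingSet G (insert a N) := by
  refine ⟨Set.insert_subset ha hN.1, fun y e he f hf hye hyf => ?_⟩
  rcases he with rfl | he <;> rcases hf with rfl | hf
  · rfl
  · exact absurd hyf (hexp y hye f hf)
  · exact absurd hye (hexp y hyf e he)
  · exact hN.2 y e he f hf hye hyf

theorem exchange (hN : IsMatchingSet G N) {a b : Sym2 V} (ha : a ∈ G.edgeSet)
    (hcov : ∀ y ∈ a, ∀ f ∈ N, y ∈ f → f = b) : IsMatchingSet G (insert a (N \ {b})) :=
  (hN.mono Set.sdiff_subset).insert_of_exposedBy ha fun y hy f hf hyf => hf.2 (hcov y hy f hf.1 hyf)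

end IsMatchingSet

theorem SimpleGraph.Walk.IsPath.notMem_support_of_common_edge {a b y : V} {e : Sym2 V}
    {q : G.Walk a b} (hq : q.IsPath) (hM : IsMatchingSet G M) (hN : IsMatchingSet G N)
    (hqMN : ∀ g ∈ q.edges, g ∈ M ∨ g ∈ N) (heM : e ∈ M) (heN : e ∈ N) (hy : y ∈ e)
    (hya : y ≠ a) (hyb : y ≠ b) : y ∉ q.support := by
  intro hyq
  have honly : ∀ g ∈ q.edges, y ∈ g → g = e := fun g hg hyg =>
    (hqMN g hg).elim (fun h => hM.2 y g h e heM hyg hy) (fun h => hN.2 y g h e heN hyg hy)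
  obtain ⟨g₁, hg₁, g₂, hg₂, hne, hy₁, hy₂⟩ :=
    hq.exists_ne_mem_edges_of_mem_support hyq hya hyb
  exact hne ((honly g₁ hg₁ hy₁).trans (honly g₂ hg₂ hy₂).symm)

theorem IsMaximumMatchingSet.of_ncard_eq (hM : IsMaximumMatchingSet G M)
    (hN : IsMatchingSet G N) (hcard : N.ncard = M.ncard) : IsMaximumMatchingSet G N :=
  ⟨hN, fun M' hM' => (hM.2 M' hM').trans hcard.ge⟩

theorem IsMaximumMatchingSet.not_exposedBy_of_adj [Finite V] (hM : IsMaximumMatchingSet G M)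
    {u w : V} (huw : G.Adj u w) (hu : ExposedBy M u) : ¬ ExposedBy M w := by
  intro hw
  have hnew : s(u, w) ∉ M := fun h => hu _ h (Sym2.mem_mk_left u w)
  have hcard := hM.2 _ (hM.1.insert_of_exposedBy huw fun y hy => by
    rcases Sym2.mem_iff.mp hy with rfl | rfl
    exacts [hu, hw])
  rw [Set.ncard_insert_of_notMem hnew] at hcard
  omega

section AlternatingPaths

variable {u w v : V}

theorem isAltWalk_cons_iff (h : G.Adj u w) (p : G.Walk w v) :
    IsAltWalk M (Walk.cons h p) ↔
      (∀ e ∈ p.edges.head?, (s(u, w) ∈ M ↔ e ∉ M)) ∧ IsAltWalk M p :=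
  List.isChain_cons

theorem isBalancedPath_nil : IsBalancedPath M (Walk.nil : G.Walk v v) :=
  ⟨Walk.IsPath.nil, Even.zero, List.isChain_nil, by simp⟩

theorem not_isExposedPath_nil : ¬ IsExposedPath M (Walk.nil : G.Walk v v) :=
  fun h => Nat.not_odd_zero h.2.1

theorem isBalancedPath_cons_iff (h : G.Adj u w) (p : G.Walk w v) :
    IsBalancedPath M (Walk.cons h p) ↔
      s(u, w) ∈ M ∧ IsExposedPath M p ∧ u ∉ p.support := by
  simp only [IsBalancedPath, IsExposedPath, Walk.cons_isPath_iff, Walk.length_cons,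
    Nat.even_add_one, Nat.not_even_iff_odd, isAltWalk_cons_iff, Walk.edges_cons,
    List.head?_cons, Option.some.injEq, forall_eq']
  constructor
  · rintro ⟨⟨hp, hu⟩, hodd, ⟨hhead, halt⟩, huw⟩
    exact ⟨huw, ⟨hp, hodd, halt, fun e he => (hhead e he).mp huw⟩, hu⟩
  · rintro ⟨huw, ⟨hp, hodd, halt, hhead⟩, hu⟩
    exact ⟨⟨hp, hu⟩, hodd, ⟨fun e he => iff_of_true huw (hhead e he), halt⟩, huw⟩

theorem isExposedPath_cons_iff (h : G.Adj u w) (p : G.Walk w v) :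
    IsExposedPath M (Walk.cons h p) ↔
      s(u, w) ∉ M ∧ IsBalancedPath M p ∧ u ∉ p.support := by
  simp only [IsBalancedPath, IsExposedPath, Walk.cons_isPath_iff, Walk.length_cons,
    Nat.odd_add_one, Nat.not_odd_iff_even, isAltWalk_cons_iff, Walk.edges_cons,
    List.head?_cons, Option.some.injEq, forall_eq']
  constructor
  · rintro ⟨⟨hp, hu⟩, heven, ⟨hhead, halt⟩, huw⟩
    exact ⟨huw, ⟨hp, heven, halt, fun e he => not_not.mp ((hhead e he).not.mp huw)⟩, hu⟩
  · rintro ⟨huw, ⟨hp, heven, halt, hhead⟩, hu⟩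
    exact ⟨⟨hp, hu⟩, heven,
      ⟨fun e he => iff_of_false huw (not_not.mpr (hhead e he)), halt⟩, huw⟩

theorem exists_isBalancedPath_or_isExposedPath_of_mem_support {d : V} (q : G.Walk d v)
    (hq : IsBalancedPath M q ∨ IsExposedPath M q) (hu : u ∈ q.support) :
    ∃ p : G.Walk u v, IsBalancedPath M p ∨ IsExposedPath M p := by
  induction q with
  | nil =>
    obtain rfl := List.mem_singleton.mp hu
    exact ⟨_, hq⟩
  | cons h q ih =>
    rcases List.mem_cons.mp hu with rfl | hu
    · exact ⟨_, hq⟩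
    refine ih ?_ hu
    rw [isBalancedPath_cons_iff, isExposedPath_cons_iff] at hq
    rcases hq with ⟨-, hq, -⟩ | ⟨-, hq, -⟩
    exacts [Or.inr hq, Or.inl hq]

theorem IsBalancedPath.mem_support_of_mem (hM : IsMatchingSet G M) (hv : ExposedBy M v)
    {q : G.Walk w v} (hq : IsBalancedPath M q) (hwu : s(w, u) ∈ M) : u ∈ q.support := by
  cases q with
  | nil => exact absurd (Sym2.mem_mk_left _ _) (hv _ hwu)
  | @cons _ c _ h r =>
    have hwc := ((isBalancedPath_cons_iff h r).mp hq).1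
    have hcu : c = u := Sym2.congr_right.mp (hM.2 w _ hwc _ hwu (by simp) (by simp))
    exact hcu ▸ List.mem_cons_of_mem _ r.start_mem_support

end AlternatingPaths

theorem exists_isMatchingSet_exposedBy_of_isBalancedPath {v : V} (hM : IsMatchingSet G M)
    (hv : ExposedBy M v) : ∀ {u : V} (p : G.Walk u v), IsBalancedPath M p →
      ∃ M', IsMatchingSet G M' ∧ M'.ncard = M.ncard ∧ ExposedBy M' u ∧
        ∀ e ∈ M, e ∉ p.edges → e ∈ M'
  | _, .nil, _ => ⟨M, hM, rfl, hv, fun _ he _ => he⟩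
  | _, .cons h .nil, hp =>
    absurd ((isBalancedPath_cons_iff h _).mp hp).2.1 not_isExposedPath_nil
  | u, .cons (v := w) huw (.cons (v := x) hwx r), hp => by
    obtain ⟨huwM, hq, hu⟩ := (isBalancedPath_cons_iff huw _).mp hp
    obtain ⟨-, hr, -⟩ := (isExposedPath_cons_iff hwx r).mp hq
    obtain ⟨M'', hM'', hcard, hx, hagree⟩ :=
      exists_isMatchingSet_exposedBy_of_isBalancedPath hM hv r hr
    have hur : u ∉ r.support := fun h => hu (List.mem_cons_of_mem _ h)
    have huwM'' : s(u, w) ∈ M'' :=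
      hagree _ huwM fun h => hur (r.fst_mem_support_of_mem_edges h)
    have hwxM'' : s(w, x) ∉ M'' := fun h => hx _ h (Sym2.mem_mk_right w x)
    refine ⟨insert s(w, x) (M'' \ {s(u, w)}), hM''.exchange hwx ?_,
      (Set.ncard_exchange hwxM'' huwM'').trans hcard, ?_, ?_⟩
    · intro y hy f hf hyf
      rcases Sym2.mem_iff.mp hy with rfl | rfl
      · exact hM''.2 y f hf _ huwM'' hyf (Sym2.mem_mk_right u y)
      · exact absurd hyf (hx f hf)
    · rintro e (rfl | ⟨he, hne⟩) hue
      · rcases Sym2.mem_iff.mp hue with rfl | rfl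
        exacts [huw.ne rfl, hur r.start_mem_support]
      · exact hne (hM''.2 u e he _ huwM'' hue (Sym2.mem_mk_left u w))
    · intro e he hep
      simp only [Walk.edges_cons, List.mem_cons, not_or] at hep
      exact Or.inr ⟨hagree e he hep.2.2, hep.1⟩

theorem ncard_sdiff_exchange_lt {α : Type*} [Finite α] {M N : Set α} {a b : α} (haM : a ∈ M)
    (haN : a ∉ N) (hbM : b ∉ M) : (M \ insert a (N \ {b})).ncard < (M \ N).ncard := by
  refine Set.ncard_lt_ncard (LE.le.ssubset_of_mem_notMem (a := a) ?_ ⟨haM, haN⟩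
    fun h => h.2 (Set.mem_insert _ _))
  rintro e ⟨he, heN'⟩
  refine ⟨he, fun heN => heN' (Or.inr ⟨heN, ?_⟩)⟩
  rintro rfl
  exact hbM he

theorem IsMaximumMatchingSet.exchange {u w x : V} (hN : IsMaximumMatchingSet G N)
    (hu : ExposedBy N u) (huw : G.Adj u w) (hwx : s(w, x) ∈ N) :
    IsMaximumMatchingSet G (insert s(u, w) (N \ {s(w, x)})) ∧
      ExposedBy (insert s(u, w) (N \ {s(w, x)})) x := by
  refine ⟨hN.of_ncard_eq (hN.1.exchange huw fun y hy f hf hyf => ?_)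
    (Set.ncard_exchange (fun h => hu _ h (Sym2.mem_mk_left u w)) hwx), ?_⟩
  · rcases Sym2.mem_iff.mp hy with rfl | rfl
    exacts [absurd hyf (hu f hf), hN.1.2 y f hf _ hwx hyf (Sym2.mem_mk_left y x)]
  · rintro e (rfl | ⟨he, hne⟩) hxe
    · rcases Sym2.mem_iff.mp hxe with rfl | rfl
      exacts [hu _ hwx (Sym2.mem_mk_right w x), (hN.1.1 hwx).ne rfl]
    · exact hne (hN.1.2 x e he _ hwx hxe (Sym2.mem_mk_right w x))

theorem exists_isBalancedPath_of_exposedBy [Finite V] (hM : IsMaximumMatchingSet G M)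
    {N : Set (Sym2 V)} (hN : IsMaximumMatchingSet G N) {u : V} (hu : ExposedBy N u) :
    ∃ v, ExposedBy M v ∧ ∃ p : G.Walk u v, IsBalancedPath M p ∧
      ∀ e ∈ p.edges, e ∈ M ∨ e ∈ N := by
  by_cases huM : ExposedBy M u
  · exact ⟨u, huM, .nil, isBalancedPath_nil, by simp⟩
  obtain ⟨_, heM, hue⟩ : ∃ e ∈ M, u ∈ e := by simpa [ExposedBy] using huM
  obtain ⟨w, rfl⟩ := Sym2.mem_iff_exists.mp hue
  have huw : G.Adj u w := hM.1.1 heM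
  obtain ⟨_, hfN, hwf⟩ : ∃ f ∈ N, w ∈ f := by
    simpa [ExposedBy] using hN.not_exposedBy_of_adj huw hu
  obtain ⟨x, rfl⟩ := Sym2.mem_iff_exists.mp hwf
  have hwx : G.Adj w x := hN.1.1 hfN
  have hxu : x ≠ u := fun h => hu _ hfN (h ▸ Sym2.mem_mk_right w x)
  have hwxM : s(w, x) ∉ M := fun h => hxu <| Sym2.congr_right.mp <|
    (hM.1.2 w _ h _ heM (Sym2.mem_mk_left w x) (Sym2.mem_mk_right u w)).trans Sym2.eq_swap
  have huwN : s(u, w) ∉ N := fun h => hu _ h (Sym2.mem_mk_left u w)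
  obtain ⟨hN', hx⟩ := hN.exchange hu huw hfN
  have hcloser := ncard_sdiff_exchange_lt heM huwN hwxM
  obtain ⟨v, hv, q, hq, hqMN'⟩ := exists_isBalancedPath_of_exposedBy hM hN' hx
  have hq_at_uw : ∀ y ∈ s(u, w), y ∉ q.support := by
    intro y hy
    refine hq.1.notMem_support_of_common_edge hM.1 hN'.1 hqMN' heM (Set.mem_insert _ _) hy ?_
      fun hyv => hv _ heM (hyv ▸ hy)
    rcases Sym2.mem_iff.mp hy with rfl | rfl
    exacts [hxu.symm, hwx.ne]
  refine ⟨v, hv, .cons huw (.cons hwx q), ?_, ?_⟩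
  · refine (isBalancedPath_cons_iff _ _).mpr ⟨heM, (isExposedPath_cons_iff _ _).mpr
      ⟨hwxM, hq, hq_at_uw w (Sym2.mem_mk_right u w)⟩, ?_⟩
    simp only [Walk.support_cons, List.mem_cons, not_or]
    exact ⟨huw.ne, hq_at_uw u (Sym2.mem_mk_left u w)⟩
  · simp only [Walk.edges_cons, List.mem_cons]
    rintro e (rfl | rfl | he)
    · exact Or.inl heM
    · exact Or.inr hfN
    · rcases hqMN' e he with h | rfl | ⟨h, -⟩
      exacts [Or.inl h, Or.inl heM, Or.inr h]
termination_by (M \ N).ncard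

theorem mem_Dset_iff [Finite V] (hM : IsMaximumMatchingSet G M) {u : V} :
    u ∈ Dset G ↔ ∃ v, ExposedBy M v ∧ ∃ p : G.Walk u v, IsBalancedPath M p := by
  constructor
  · rintro ⟨N, hN, hu⟩
    obtain ⟨v, hv, p, hp, -⟩ := exists_isBalancedPath_of_exposedBy hM hN hu
    exact ⟨v, hv, p, hp⟩
  · rintro ⟨v, hv, p, hp⟩
    obtain ⟨M', hM', hcard, hu, -⟩ :=
      exists_isMatchingSet_exposedBy_of_isBalancedPath hM.1 hv p hp
    exact ⟨M', hM.of_ncard_eq hM' hcard, hu⟩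

theorem exists_isExposedPath_of_adj {u d v : V} (hM : IsMatchingSet G M) (hv : ExposedBy M v)
    {q : G.Walk d v} (hq : IsBalancedPath M q) (hud : G.Adj u d)
    (hu : ∀ p : G.Walk u v, ¬ IsBalancedPath M p) : ∃ p : G.Walk u v, IsExposedPath M p := by
  by_cases huq : u ∈ q.support
  · obtain ⟨p, hp | hp⟩ :=
      exists_isBalancedPath_or_isExposedPath_of_mem_support q (.inl hq) huq
    exacts [absurd hp (hu p), ⟨p, hp⟩]
  · have hudM : s(u, d) ∉ M := fun h =>
      huq (hq.mem_support_of_mem hM hv (Sym2.eq_swap ▸ h))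
    exact ⟨.cons hud q, (isExposedPath_cons_iff hud q).mpr ⟨hudM, hq, huq⟩⟩

theorem stmt1 [Finite V] (G : SimpleGraph V) (M : Set (Sym2 V))
    (hM : IsMaximumMatchingSet G M) (u : V) :
    u ∈ Aset G ↔
      (∀ v : V, ExposedBy M v → ∀ p : G.Walk u v, ¬ IsBalancedPath M p) ∧
        ∃ v : V, ExposedBy M v ∧ ∃ p : G.Walk u v, IsExposedPath M p := by
  have hD : ∀ {x : V},
      x ∈ Dset G ↔ ∃ v, ExposedBy M v ∧ ∃ p : G.Walk x v, IsBalancedPath M p :=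
    mem_Dset_iff hM
  constructor
  · rintro ⟨huD, d, hdD, hdu⟩
    have hbal : ∀ v, ExposedBy M v → ∀ p : G.Walk u v, ¬ IsBalancedPath M p :=
      fun v hv p hp => huD (hD.mpr ⟨v, hv, p, hp⟩)
    obtain ⟨v, hv, q, hq⟩ := hD.mp hdD
    exact ⟨hbal, v, hv, exists_isExposedPath_of_adj hM.1 hv hq hdu.symm (hbal v hv)⟩
  · rintro ⟨hbal, v, hv, p, hp⟩
    cases p with
    | nil => exact absurd hp not_isExposedPath_nil
    | cons huw q =>
      have hq := ((isExposedPath_cons_iff huw q).mp hp).2.1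
      refine ⟨fun huD => ?_, _, hD.mpr ⟨v, hv, q, hq⟩, huw.symm⟩
      obtain ⟨v', hv', p', hp'⟩ := hD.mp huD
      exact hbal v' hv' p' hp'
end

section
/- Let G be a factorizable graph with perfect matching M, and x ∈ V(G). Then u ∈ C(G−x) if and only if there is neither an M-saturated path between u and x nor an M-balanced path from x to u. -/
open SimpleGraph

variable {V : Type*}

/-!
Write `H = G - x`. As `H` has `2|M| - 1` vertices and `M` minus its edge at `x` is a matching of
`H`, a matching of `H` is maximum iff it exposes exactly one vertex; so `u ∈ D(H)` iff some
matching of `G` exposes exactly `u` and `x`. Switching `M` along an `M`-saturated `u`–`x` path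
gives such a matching. Conversely, if `N` exposes exactly `u` and `x`, follow the `M`-edge `uv`
and the `N`-edge `vw`: then `N - vw + uv` exposes exactly `w` and `x` and is closer to `M`, so by
induction there is an `M`-saturated `w`–`x` path whose `M`-edges avoid `uv`, and prepending
`u v` gives one from `u`. Hence `u ∈ D(H)` iff there is an `M`-saturated path between `u` and `x`.

If `u ∈ A(H)` has a neighbour `w ∈ D(H)`, the saturated path from `w` to `x` either passes
through `u`, and its tail from `u` is saturated or reverses to a balanced path, or it does not, and
the path `u w ... x` reverses to a balanced path. Conversely, the last edge of a balanced path from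
`x` to `u` joins `u` to the start of a saturated path to `x`, i.e. to a vertex of `D(H)`.
-/

lemma symmDiff_insert_insert {α : Type*} {N E : Set α} {e f : α} (he : e ∈ N) (hf : f ∉ N) :
    symmDiff N (insert e (insert f E)) = insert f (symmDiff N E \ {e}) := by
  ext g
  simp only [Set.mem_symmDiff, Set.mem_insert_iff, Set.mem_sdiff, Set.mem_singleton_iff]
  grind

section Matchings

variable {G : SimpleGraph V} {M N : Set (Sym2 V)} {e : Sym2 V} {v : V}

lemma IsPerfectMatchingSet.isMatchingSet (hM : IsPerfectMatchingSet G M) : IsMatchingSet G M :=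
  ⟨hM.1, fun v _ he _ hf hve hvf => (hM.2 v).unique ⟨he, hve⟩ ⟨hf, hvf⟩⟩

lemma IsPerfectMatchingSet.not_exposedBy (hM : IsPerfectMatchingSet G M) (v : V) :
    ¬ ExposedBy M v := fun h => by
  obtain ⟨e, ⟨he, hv⟩, -⟩ := hM.2 v
  exact h e he hv

lemma IsMatchingSet.mono_s3 (hN : IsMatchingSet G N) (h : M ⊆ N) : IsMatchingSet G M :=
  ⟨h.trans hN.1, fun v e he f hf => hN.2 v e (h he) f (h hf)⟩

lemma IsMatchingSet.insert_of_exposedBy_s3 (hN : IsMatchingSet G N) (he : e ∈ G.edgeSet)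
    (hexp : ∀ v ∈ e, ExposedBy N v) : IsMatchingSet G (insert e N) := by
  refine ⟨Set.insert_subset he hN.1, fun v f hf g hg hvf hvg => ?_⟩
  rcases hf with rfl | hf <;> rcases hg with rfl | hg
  · rfl
  · exact absurd hvg (hexp v hvf g hg)
  · exact absurd hvf (hexp v hvg f hf)
  · exact hN.2 v f hf g hg hvf hvg

lemma exposedBy_insert : ExposedBy (insert e N) v ↔ v ∉ e ∧ ExposedBy N v := by
  simp [ExposedBy]

lemma IsMatchingSet.exposedBy_sdiff_singleton (hN : IsMatchingSet G N) (he : e ∈ N) :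
    ExposedBy (N \ {e}) v ↔ ExposedBy N v ∨ v ∈ e := by
  refine ⟨fun h => or_iff_not_imp_right.mpr fun hve f hf hvf => ?_, ?_⟩
  · exact h f ⟨hf, fun hfe => hve (Set.mem_singleton_iff.mp hfe ▸ hvf)⟩ hvf
  · rintro (h | hve) f ⟨hf, hfe⟩ hvf
    · exact h f hf hvf
    · exact hfe (hN.2 v f hf e he hvf hve)

lemma IsMatchingSet.exists_adj_of_not_exposedBy (hN : IsMatchingSet G N) {v : V}
    (hv : ¬ ExposedBy N v) : ∃ w, G.Adj v w ∧ s(v, w) ∈ N := by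
  simp only [ExposedBy, not_forall, not_not] at hv
  obtain ⟨e, he, hve⟩ := hv
  obtain ⟨w, rfl⟩ := Sym2.mem_iff_exists.mp hve
  exact ⟨w, hN.1 he, he⟩

lemma IsMatchingSet.exchange_s3 (hN : IsMatchingSet G N) {u v w : V} (hu : ExposedBy N u)
    (huv : G.Adj u v) (hvw : s(v, w) ∈ N) :
    IsMatchingSet G (insert s(u, v) (N \ {s(v, w)})) ∧
      ∀ y, ExposedBy (insert s(u, v) (N \ {s(v, w)})) y ↔
        ExposedBy N y ∧ y ≠ u ∨ y = w := by
  have hv : ¬ ExposedBy N v := fun hv => hv _ hvw (by simp)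
  have hwu : w ≠ u := fun h => hu _ hvw (by simp [h])
  have hwv : w ≠ v := (hN.1 hvw).ne'
  refine ⟨(hN.mono_s3 Set.sdiff_subset).insert_of_exposedBy_s3 huv fun y hy => ?_, fun y => ?_⟩
  · rw [hN.exposedBy_sdiff_singleton hvw]
    rcases Sym2.mem_iff.mp hy with rfl | rfl <;> simp [hu]
  · rw [exposedBy_insert, hN.exposedBy_sdiff_singleton hvw, Sym2.mem_iff, Sym2.mem_iff]
    grind

lemma IsMatchingSet.ncard_exposedBy_add [Finite V] (hN : IsMatchingSet G N) :
    {v | ExposedBy N v}.ncard + 2 * N.ncard = Nat.card V := by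
  classical
  have hfin := N.toFinite
  have hsupp : {v | ExposedBy N v}ᶜ = ↑(hfin.toFinset.biUnion Sym2.toFinset) := by
    ext v; simp [ExposedBy]
  have hcard : (hfin.toFinset.biUnion Sym2.toFinset).card = 2 * N.ncard := by
    rw [Finset.card_biUnion, Finset.sum_congr rfl fun e he => Sym2.card_toFinset_of_not_isDiag e
      (G.not_isDiag_of_mem_edgeSet (hN.1 (hfin.mem_toFinset.mp he))), Finset.sum_const,
      smul_eq_mul, mul_comm, Set.ncard_eq_toFinset_card N hfin]
    intro e he f hf hef
    refine Finset.disjoint_left.mpr fun v hve hvf => hef ?_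
    exact hN.2 v e (hfin.mem_toFinset.mp he) f (hfin.mem_toFinset.mp hf)
      (Sym2.mem_toFinset.mp hve) (Sym2.mem_toFinset.mp hvf)
  rw [← Set.ncard_add_ncard_compl {v | ExposedBy N v}, hsupp, Set.ncard_coe_finset, hcard]

lemma IsMatchingSet.isMaximumMatchingSet [Finite V] (hN : IsMatchingSet G N)
    (hexp : {v | ExposedBy N v}.Subsingleton) : IsMaximumMatchingSet G N := by
  refine ⟨hN, fun N' hN' => ?_⟩
  have h := hN.ncard_exposedBy_add
  have h' := hN'.ncard_exposedBy_add
  have := Set.ncard_le_one_iff_subsingleton.mpr hexp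
  omega

end Matchings

section Induce

variable {G : SimpleGraph V} {S : Set V}

lemma IsMatchingSet.image_map_val {N : Set (Sym2 S)} (hN : IsMatchingSet (G.induce S) N) :
    IsMatchingSet G (Sym2.map Subtype.val '' N) := by
  refine ⟨?_, ?_⟩
  · rintro _ ⟨e, he, rfl⟩
    induction e using Sym2.ind with
    | _ a b => exact (SimpleGraph.mem_edgeSet _).mp (hN.1 he)
  · rintro v _ ⟨e, he, rfl⟩ _ ⟨f, hf, rfl⟩ hve hvf
    obtain ⟨a, ha, rfl⟩ := Sym2.mem_map.mp hve
    obtain ⟨b, hb, hba⟩ := Sym2.mem_map.mp hvf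
    obtain rfl := Subtype.val_injective hba
    rw [hN.2 b e he f hf ha hb]

lemma exposedBy_image_map_val_iff {N : Set (Sym2 S)} {u : S} :
    ExposedBy (Sym2.map Subtype.val '' N) u ↔ ExposedBy N u := by
  refine ⟨fun h e he hue => h _ ⟨e, he, rfl⟩ (Sym2.mem_map.mpr ⟨u, hue, rfl⟩), ?_⟩
  rintro h _ ⟨f, hf, rfl⟩ hue
  obtain ⟨a, ha, hau⟩ := Sym2.mem_map.mp hue
  obtain rfl := Subtype.val_injective hau
  exact h f hf ha

lemma exposedBy_image_map_val_of_notMem {N : Set (Sym2 S)} {v : V} (hv : v ∉ S) :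
    ExposedBy (Sym2.map Subtype.val '' N) v := by
  rintro _ ⟨f, -, rfl⟩ hvf
  obtain ⟨a, -, rfl⟩ := Sym2.mem_map.mp hvf
  exact hv a.2

lemma IsMatchingSet.exists_image_map_val_eq {N : Set (Sym2 V)} (hN : IsMatchingSet G N)
    (hS : ∀ v ∉ S, ExposedBy N v) :
    ∃ N' : Set (Sym2 S), IsMatchingSet (G.induce S) N' ∧ Sym2.map Subtype.val '' N' = N := by
  refine ⟨Sym2.map Subtype.val ⁻¹' N, ⟨?_, fun v e he f hf hve hvf => ?_⟩, ?_⟩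
  · intro e he
    induction e using Sym2.ind with
    | _ a b => exact (SimpleGraph.mem_edgeSet _).mp (hN.1 he)
  · exact Sym2.map.injective Subtype.val_injective
      (hN.2 v _ he _ hf (Sym2.mem_map.mpr ⟨v, hve, rfl⟩) (Sym2.mem_map.mpr ⟨v, hvf, rfl⟩))
  · refine Set.image_preimage_eq_of_subset fun e he => ?_
    induction e using Sym2.ind with
    | _ a b =>
      have hmem (c : V) (hc : c ∈ s(a, b)) : c ∈ S := by_contra fun h => hS c h _ he hc
      exact ⟨s(⟨a, hmem a (by simp)⟩, ⟨b, hmem b (by simp)⟩), rfl⟩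

lemma ncard_image_map_val (N : Set (Sym2 S)) :
    (Sym2.map Subtype.val '' N).ncard = N.ncard :=
  Set.ncard_image_of_injective _ (Sym2.map.injective Subtype.val_injective)

lemma mk_mem_Dset_induce [Finite V] {N : Set (Sym2 V)} (hN : IsMatchingSet G N) {u : V}
    (hu : u ∈ S) (hexp : ∀ v, ExposedBy N v ↔ v ∉ S ∨ v = u) :
    (⟨u, hu⟩ : S) ∈ Dset (G.induce S) := by
  obtain ⟨N', hN', rfl⟩ := hN.exists_image_map_val_eq fun v hv => (hexp v).mpr (Or.inl hv)
  have hexp' (v : S) : ExposedBy N' v ↔ v = ⟨u, hu⟩ := by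
    rw [← exposedBy_image_map_val_iff, hexp, Subtype.ext_iff]
    simp [v.2]
  refine ⟨N', hN'.isMaximumMatchingSet fun v hv w hw => ?_, (hexp' _).mpr rfl⟩
  rw [(hexp' v).mp hv, (hexp' w).mp hw]

lemma IsPerfectMatchingSet.two_mul_ncard [Finite V] {M : Set (Sym2 V)}
    (hM : IsPerfectMatchingSet G M) : 2 * M.ncard = Nat.card V := by
  rw [← hM.isMatchingSet.ncard_exposedBy_add,
    Set.eq_empty_of_forall_notMem (s := {v | ExposedBy M v}) hM.not_exposedBy, Set.ncard_empty,
    zero_add]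

lemma IsPerfectMatchingSet.exists_induce_compl_singleton [Finite V] {M : Set (Sym2 V)}
    (hM : IsPerfectMatchingSet G M) (x : V) :
    ∃ M' : Set (Sym2 ({x}ᶜ : Set V)),
      IsMatchingSet (G.induce ({x}ᶜ : Set V)) M' ∧ M'.ncard + 1 = M.ncard := by
  obtain ⟨e, ⟨he, hxe⟩, -⟩ := hM.2 x
  have hexp : ∀ v ∉ ({x}ᶜ : Set V), ExposedBy (M \ {e}) v := fun v hv =>
    (hM.isMatchingSet.exposedBy_sdiff_singleton he).mpr
      (Or.inr (by rwa [Set.notMem_compl_iff.mp hv]))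
  obtain ⟨M', hM', hM'eq⟩ :=
    (hM.isMatchingSet.mono_s3 Set.sdiff_subset).exists_image_map_val_eq hexp
  refine ⟨M', hM', ?_⟩
  rw [← ncard_image_map_val, hM'eq, Set.ncard_sdiff_singleton_add_one he]

lemma exists_matching_of_mk_mem_Dset_induce [Finite V] {M : Set (Sym2 V)}
    (hM : IsPerfectMatchingSet G M) {x u : V} (hu : u ∈ ({x}ᶜ : Set V))
    (hD : (⟨u, hu⟩ : ({x}ᶜ : Set V)) ∈ Dset (G.induce ({x}ᶜ : Set V))) :
    ∃ N, IsMatchingSet G N ∧ ∀ v, ExposedBy N v ↔ v = u ∨ v = x := by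
  obtain ⟨N, ⟨hN, hNmax⟩, hNu⟩ := hD
  obtain ⟨M', hM', hM'card⟩ := hM.exists_induce_compl_singleton x
  have hsub : {u, x} ⊆ {v | ExposedBy (Sym2.map Subtype.val '' N) v} := by
    rintro _ (rfl | rfl)
    · exact exposedBy_image_map_val_iff.mpr hNu
    · exact exposedBy_image_map_val_of_notMem (by simp)
  have hle : {v | ExposedBy (Sym2.map Subtype.val '' N) v}.ncard ≤ ({u, x} : Set V).ncard := by
    have h₁ := hN.image_map_val.ncard_exposedBy_add
    have h₂ := hM.two_mul_ncard
    have h₃ := hNmax M' hM'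
    rw [ncard_image_map_val] at h₁
    rw [Set.ncard_pair hu]
    omega
  have heq := Set.eq_of_subset_of_ncard_le hsub hle
  exact ⟨_, hN.image_map_val, fun v => by simpa using (Set.ext_iff.mp heq v).symm⟩

end Induce

section AlternatingPaths

variable {G : SimpleGraph V} {M : Set (Sym2 V)}

lemma isAltWalk_iff {u v : V} {p : G.Walk u v} :
    IsAltWalk M p ↔ p.edges.IsChain (fun e f => e ∈ M ↔ f ∉ M) :=
  Iff.rfl

lemma IsAltWalk.of_cons {u v w : V} {h : G.Adj u v} {p : G.Walk v w}
    (hp : IsAltWalk M (Walk.cons h p)) : IsAltWalk M p :=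
  List.IsChain.tail hp

lemma IsAltWalk.reverse {u v : V} {p : G.Walk u v} (hp : IsAltWalk M p) :
    IsAltWalk M p.reverse := by
  rw [isAltWalk_iff, Walk.edges_reverse]
  exact List.isChain_reverse.mpr (hp.imp fun e f => by tauto)

lemma IsAltWalk.odd_length_iff {u v : V} {p : G.Walk u v} (hp : IsAltWalk M p) {e f : Sym2 V}
    (he : p.edges.head? = some e) (hf : p.edges.getLast? = some f) :
    Odd p.length ↔ (f ∈ M ↔ e ∈ M) := by
  induction p generalizing e with
  | nil => simp at he
  | @cons u v w h p ih =>
    obtain rfl : s(u, v) = e := by simpa using he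
    cases p with
    | nil =>
      obtain rfl : s(u, v) = f := by simpa using hf
      simp
    | @cons _ w' _ h' p =>
      have hrel : s(u, v) ∈ M ↔ s(v, w') ∉ M := (isAltWalk_iff.mp hp).rel
      have := ih hp.of_cons (e := s(v, w')) (by simp) (by simpa [List.getLast?_cons_cons] using hf)
      rw [Walk.length_cons, Nat.odd_add_one, this]
      tauto

end AlternatingPaths

section SaturatedPaths

variable {G : SimpleGraph V} {M : Set (Sym2 V)}

lemma IsSaturatedPath.ne {u x : V} {p : G.Walk u x} (hp : IsSaturatedPath M p) : u ≠ x := by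
  rintro rfl
  have := hp.2.1
  rw [(Walk.isPath_iff_nil.mp hp.1).eq_nil] at this
  simp at this

lemma IsSaturatedPath.getLast_mem {u x : V} {p : G.Walk u x} (hp : IsSaturatedPath M p)
    {f : Sym2 V} (hf : p.edges.getLast? = some f) : f ∈ M := by
  obtain ⟨e, he⟩ : ∃ e, p.edges.head? = some e := by
    cases h : p.edges <;> simp_all
  exact ((hp.2.2.1.odd_length_iff he hf).mp hp.2.1).mpr (hp.2.2.2 e he)

lemma IsSaturatedPath.reverse {u x : V} {p : G.Walk u x} (hp : IsSaturatedPath M p) :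
    IsSaturatedPath M p.reverse := by
  refine ⟨hp.1.reverse, by simpa using hp.2.1, hp.2.2.1.reverse, fun f hf => hp.getLast_mem ?_⟩
  rwa [Walk.edges_reverse, List.head?_reverse] at hf

lemma isSaturatedPath_cons_nil_iff {u v : V} (h : G.Adj u v) :
    IsSaturatedPath M (Walk.cons h Walk.nil) ↔ s(u, v) ∈ M := by
  simp [IsSaturatedPath, isAltWalk_iff, h.ne]

lemma isSaturatedPath_cons_cons_iff {u v w x : V} (h : G.Adj u v) (h' : G.Adj v w)
    (p : G.Walk w x) :
    IsSaturatedPath M (Walk.cons h (Walk.cons h' p)) ↔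
      (Walk.cons h (Walk.cons h' p)).IsPath ∧ s(u, v) ∈ M ∧ s(v, w) ∉ M ∧
        IsSaturatedPath M p := by
  cases p with
  | nil => simp [IsSaturatedPath]
  | cons h'' p =>
    simp only [IsSaturatedPath, isAltWalk_iff, Walk.edges_cons, List.isChain_cons_cons,
      Walk.length_cons, List.head?_cons, Option.some.injEq, forall_eq', Nat.odd_add_one, not_not]
    constructor
    · rintro ⟨hpath, hodd, ⟨h₁, h₂, halt⟩, huv⟩
      exact ⟨hpath, huv, h₁.mp huv, hpath.of_cons.of_cons, hodd, halt, by tauto⟩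
    · rintro ⟨hpath, huv, hvw, -, hodd, halt, hw⟩
      exact ⟨hpath, hodd, ⟨by tauto, by tauto, halt⟩, huv⟩

lemma IsSaturatedPath.exists_mem_edges {u x : V} {p : G.Walk u x} (hp : IsSaturatedPath M p)
    {v : V} (hv : v ∈ p.support) : ∃ e ∈ p.edges, e ∈ M ∧ v ∈ e := by
  match p, hp with
  | Walk.nil, hp => exact absurd hp.2.1 (by simp)
  | Walk.cons h Walk.nil, hp =>
    refine ⟨_, List.mem_singleton_self _, (isSaturatedPath_cons_nil_iff h).mp hp, ?_⟩
    simp only [Walk.support_cons, Walk.support_nil, List.mem_cons, List.not_mem_nil] at hv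
    rcases hv with rfl | rfl | h <;> simp_all
  | Walk.cons h (Walk.cons h' q), hp =>
    obtain ⟨-, huv, -, hq⟩ := (isSaturatedPath_cons_cons_iff h h' q).mp hp
    simp only [Walk.support_cons, List.mem_cons] at hv
    rcases hv with rfl | rfl | hv
    · exact ⟨_, by simp, huv, by simp⟩
    · exact ⟨_, by simp, huv, by simp⟩
    · obtain ⟨e, he, heM, hve⟩ := hq.exists_mem_edges hv
      exact ⟨e, by simp [he], heM, hve⟩

end SaturatedPaths

section Switching

variable {G : SimpleGraph V} {M N : Set (Sym2 V)}

lemma IsSaturatedPath.symmDiff_edgeSet {u x : V} {p : G.Walk u x} (hN : IsMatchingSet G N)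
    (hp : IsSaturatedPath N p) :
    IsMatchingSet G (symmDiff N p.edgeSet) ∧
      ∀ v, ExposedBy (symmDiff N p.edgeSet) v ↔ ExposedBy N v ∨ v = u ∨ v = x := by
  match p, hp with
  | Walk.nil, hp => exact absurd hp.2.1 (by simp)
  | Walk.cons h Walk.nil, hp =>
    have he := (isSaturatedPath_cons_nil_iff h).mp hp
    have heq : symmDiff N (Walk.cons h Walk.nil).edgeSet = N \ {s(u, x)} := by
      ext g; simp only [Walk.edgeSet_cons, Walk.edgeSet_nil, Set.mem_symmDiff]; grind
    rw [heq]
    exact ⟨hN.mono_s3 Set.sdiff_subset, fun v => by simp [hN.exposedBy_sdiff_singleton he]⟩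
  | @Walk.cons _ _ u v _ h (@Walk.cons _ _ _ w _ h' q), hp =>
    obtain ⟨hpath, he, hf, hq⟩ := (isSaturatedPath_cons_cons_iff h h' q).mp hp
    obtain ⟨hN', hexp'⟩ := hq.symmDiff_edgeSet hN
    obtain ⟨⟨-, hu⟩, -⟩ : (u ≠ v ∧ u ∉ q.support) ∧ _ := by
      simpa using hpath.support_nodup
    have hw : ¬ ExposedBy N w := fun hw => by
      obtain ⟨g, -, hg, hwg⟩ := hq.exists_mem_edges q.start_mem_support
      exact hw g hg hwg
    have hvu : s(v, u) ∈ symmDiff N q.edgeSet := by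
      rw [Sym2.eq_swap]
      exact Or.inl ⟨he, mt q.fst_mem_support_of_mem_edges hu⟩
    rw [Walk.edgeSet_cons, Walk.edgeSet_cons, symmDiff_insert_insert he hf,
      Sym2.eq_swap (a := u), Sym2.eq_swap (a := v)]
    obtain ⟨hN'', hexp''⟩ := hN'.exchange_s3 ((hexp' w).mpr (Or.inr (Or.inl rfl))) h'.symm hvu
    refine ⟨hN'', fun y => ?_⟩
    have hwx := hq.ne
    rw [hexp'', hexp']
    grind

lemma exists_isSaturatedPath_of_exposedBy [Finite V] (hM : IsPerfectMatchingSet G M)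
    (hN : IsMatchingSet G N) {u x : V} (hux : u ≠ x)
    (hexp : ∀ y, ExposedBy N y ↔ y = u ∨ y = x) :
    ∃ p : G.Walk u x, IsSaturatedPath M p ∧ ∀ e ∈ p.edges, e ∈ M → e ∉ N := by
  induction hn : (M \ N).ncard using Nat.strong_induction_on generalizing N u with
  | _ n ih =>
  obtain ⟨v, huv, he⟩ := hM.isMatchingSet.exists_adj_of_not_exposedBy (hM.not_exposedBy u)
  have heN : s(u, v) ∉ N := fun h => (hexp u).mpr (Or.inl rfl) _ h (by simp)
  by_cases hvx : v = x
  · subst hvx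
    refine ⟨Walk.cons huv Walk.nil, (isSaturatedPath_cons_nil_iff huv).mpr he, ?_⟩
    simpa using fun _ => heN
  obtain ⟨w, hvw, hf⟩ := hN.exists_adj_of_not_exposedBy
    (by rw [hexp]; exact fun h => h.elim huv.ne' hvx)
  have hfM : s(v, w) ∉ M := fun h => heN <| by
    rwa [hM.isMatchingSet.2 v _ he _ h (by simp) (by simp)]
  obtain ⟨hN₂, hexp₂⟩ := hN.exchange_s3 ((hexp u).mpr (Or.inl rfl)) huv hf
  have hsub : M \ insert s(u, v) (N \ {s(v, w)}) ⊂ M \ N := by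
    refine (Set.ssubset_iff_of_subset ?_).mpr
      ⟨s(u, v), ⟨he, heN⟩, fun h => h.2 (Set.mem_insert _ _)⟩
    rintro g ⟨hgM, hg⟩
    refine ⟨hgM, fun hgN => hg (Set.mem_insert_of_mem _ ⟨hgN, ?_⟩)⟩
    rintro rfl
    exact hfM hgM
  have hwx : w ≠ x := fun h => (hexp x).mpr (Or.inr rfl) _ hf (by simp [h])
  obtain ⟨q, hq, hqN₂⟩ := ih _ (hn ▸ Set.ncard_lt_ncard hsub) hN₂ hwx
    (fun y => by rw [hexp₂, hexp]; grind) rfl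
  have hnotMem {y : V} (hy : y ∈ s(u, v)) : y ∉ q.support := fun hyq => by
    obtain ⟨g, hg, hgM, hyg⟩ := hq.exists_mem_edges hyq
    obtain rfl := hM.isMatchingSet.2 y g hgM _ he hyg hy
    exact hqN₂ _ hg hgM (Set.mem_insert _ _)
  refine ⟨Walk.cons huv (Walk.cons hvw q), ?_, ?_⟩
  · refine (isSaturatedPath_cons_cons_iff huv hvw q).mpr ⟨?_, he, hfM, hq⟩
    simp only [Walk.cons_isPath_iff, Walk.support_cons, List.mem_cons, not_or]
    exact ⟨⟨hq.1, hnotMem (by simp)⟩, huv.ne, hnotMem (by simp)⟩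
  · simp only [Walk.edges_cons, List.mem_cons, forall_eq_or_imp]
    refine ⟨fun _ => heN, fun h => absurd h hfM, fun g hg hgM hgN => hqN₂ g hg hgM ?_⟩
    refine Set.mem_insert_of_mem _ ⟨hgN, ?_⟩
    rintro rfl
    exact hfM hgM

end Switching

section GallaiEdmondsSets

variable {G : SimpleGraph V} {M : Set (Sym2 V)}

lemma mk_mem_Dset_induce_compl_singleton_iff [Finite V] (hM : IsPerfectMatchingSet G M)
    {x u : V} (hu : u ∈ ({x}ᶜ : Set V)) :
    (⟨u, hu⟩ : ({x}ᶜ : Set V)) ∈ Dset (G.induce ({x}ᶜ : Set V)) ↔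
      ∃ p : G.Walk u x, IsSaturatedPath M p := by
  constructor
  · intro hD
    obtain ⟨N, hN, hexp⟩ := exists_matching_of_mk_mem_Dset_induce hM hu hD
    obtain ⟨p, hp, -⟩ := exists_isSaturatedPath_of_exposedBy hM hN hu hexp
    exact ⟨p, hp⟩
  · rintro ⟨p, hp⟩
    obtain ⟨hN, hexp⟩ := hp.symmDiff_edgeSet hM.isMatchingSet
    refine mk_mem_Dset_induce hN hu fun v => ?_
    simp [hexp, hM.not_exposedBy, or_comm]

lemma exists_isSaturatedPath_or_isBalancedPath {u x : V} {r : G.Walk u x} (hr : r.IsPath)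
    (halt : IsAltWalk M r) (hlast : ∀ e, r.edges.getLast? = some e → e ∈ M) :
    (∃ p : G.Walk u x, IsSaturatedPath M p) ∨ ∃ q : G.Walk x u, IsBalancedPath M q := by
  have hhead : ∀ e, r.reverse.edges.head? = some e → e ∈ M := by
    simpa [Walk.edges_reverse, List.head?_reverse] using hlast
  rcases Nat.even_or_odd r.length with h | h
  · exact .inr ⟨r.reverse, hr.reverse, by simpa using h, halt.reverse, hhead⟩
  · refine .inl ⟨r, ?_⟩
    simpa using (show IsSaturatedPath M r.reverse from
      ⟨hr.reverse, by simpa using h, halt.reverse, hhead⟩).reverse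

lemma exists_isSaturatedPath_or_isBalancedPath_of_adj (hM : IsMatchingSet G M)
    {u w x : V} (hux : u ≠ x) (huw : G.Adj u w) {p : G.Walk w x} (hp : IsSaturatedPath M p) :
    (∃ p : G.Walk u x, IsSaturatedPath M p) ∨ ∃ q : G.Walk x u, IsBalancedPath M q := by
  classical
  by_cases hu : u ∈ p.support
  · have hsplit : p.edges = (p.takeUntil u hu).edges ++ (p.dropUntil u hu).edges := by
      rw [← Walk.edges_append, Walk.take_spec]
    have hne : (p.dropUntil u hu).edges ≠ [] := fun h =>
      hux (Walk.eq_of_length_eq_zero (by rw [← Walk.length_edges, h, List.length_nil]))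
    refine exists_isSaturatedPath_or_isBalancedPath (hp.1.dropUntil hu) ?_
      fun e he => hp.getLast_mem ?_
    · have halt := hp.2.2.1
      rw [isAltWalk_iff, hsplit] at halt
      exact halt.right_of_append
    · rwa [hsplit, List.getLast?_append_of_ne_nil _ hne]
  · cases p with
    | nil => exact absurd hp.2.1 (by simp)
    | @cons _ v _ hwv p =>
      have hwvM : s(w, v) ∈ M := hp.2.2.2 _ rfl
      have huwM : s(u, w) ∉ M := fun h => hu <| by
        obtain ⟨rfl, -⟩ | ⟨rfl, -⟩ :=
          Sym2.eq_iff.mp (hM.2 w _ h _ hwvM (by simp) (by simp)) <;> simp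
      refine exists_isSaturatedPath_or_isBalancedPath (hp.1.cons hu (h := huw)) ?_
        fun e he => hp.getLast_mem ?_
      · rw [isAltWalk_iff, Walk.edges_cons, Walk.edges_cons, List.isChain_cons_cons]
        exact ⟨iff_of_false huwM (not_not.mpr hwvM), hp.2.2.1⟩
      · rwa [Walk.edges_cons, Walk.edges_cons, List.getLast?_cons_cons] at he

lemma exists_isSaturatedPath_or_isBalancedPath_of_mk_mem_Aset_induce [Finite V]
    (hM : IsPerfectMatchingSet G M) {x u : V} (hu : u ∈ ({x}ᶜ : Set V))
    (hA : (⟨u, hu⟩ : ({x}ᶜ : Set V)) ∈ Aset (G.induce ({x}ᶜ : Set V))) :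
    (∃ p : G.Walk u x, IsSaturatedPath M p) ∨ ∃ q : G.Walk x u, IsBalancedPath M q := by
  obtain ⟨-, w, hwD, hwu⟩ := hA
  obtain ⟨p, hp⟩ := (mk_mem_Dset_induce_compl_singleton_iff hM w.2).mp hwD
  exact exists_isSaturatedPath_or_isBalancedPath_of_adj hM.isMatchingSet hu hwu.symm hp

lemma IsBalancedPath.exists_adj_isSaturatedPath {x u : V} {q : G.Walk x u}
    (hq : IsBalancedPath M q) (hxu : x ≠ u) :
    ∃ w, G.Adj u w ∧ ∃ r : G.Walk w x, IsSaturatedPath M r := by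
  obtain ⟨hpath, heven, halt, hhead⟩ := hq
  obtain ⟨e, he⟩ : ∃ e, q.edges.head? = some e := by
    cases q with
    | nil => exact absurd rfl hxu
    | cons h q => exact ⟨_, rfl⟩
  have hlast : q.reverse.edges.getLast? = some e := by
    rwa [Walk.edges_reverse, List.getLast?_reverse]
  have hlen : Even q.reverse.length := by rwa [Walk.length_reverse]
  have hrpath := hpath.reverse
  have hralt := halt.reverse
  generalize q.reverse = r at hlast hlen hrpath hralt
  cases r with
  | nil => simp at hlast
  | @cons _ w _ huw r =>
    have huwM : s(u, w) ∉ M := by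
      have := IsAltWalk.odd_length_iff hralt rfl hlast
      rw [← Nat.not_even_iff_odd] at this
      have := hhead e he
      tauto
    refine ⟨w, huw, r, hrpath.of_cons, ?_, hralt.of_cons, fun f hf => ?_⟩
    · simpa [Walk.length_cons, Nat.even_add_one] using hlen
    · have := (List.isChain_cons.mp hralt).1 f hf
      tauto

lemma mk_mem_Dset_or_mk_mem_Aset_of_isBalancedPath [Finite V] (hM : IsPerfectMatchingSet G M)
    {x u : V} (hu : u ∈ ({x}ᶜ : Set V)) {q : G.Walk x u} (hq : IsBalancedPath M q) :
    (⟨u, hu⟩ : ({x}ᶜ : Set V)) ∈ Dset (G.induce ({x}ᶜ : Set V)) ∨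
      (⟨u, hu⟩ : ({x}ᶜ : Set V)) ∈ Aset (G.induce ({x}ᶜ : Set V)) := by
  obtain ⟨w, huw, r, hr⟩ := hq.exists_adj_isSaturatedPath (Ne.symm hu)
  have hw : w ∈ ({x}ᶜ : Set V) := hr.ne
  by_cases hD : (⟨u, hu⟩ : ({x}ᶜ : Set V)) ∈ Dset (G.induce ({x}ᶜ : Set V))
  · exact .inl hD
  · exact .inr ⟨hD, ⟨w, hw⟩, (mk_mem_Dset_induce_compl_singleton_iff hM hw).mpr ⟨r, hr⟩,
      huw.symm⟩

end GallaiEdmondsSets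

theorem stmt3 [Finite V] (G : SimpleGraph V) (M : Set (Sym2 V))
    (hM : IsPerfectMatchingSet G M) (x u : V) (hu : u ∈ ({x}ᶜ : Set V)) :
    (⟨u, hu⟩ : ({x}ᶜ : Set V)) ∈ Cset (G.induce ({x}ᶜ : Set V)) ↔
      (∀ p : G.Walk u x, ¬ IsSaturatedPath M p) ∧
        ∀ q : G.Walk x u, ¬ IsBalancedPath M q := by
  have hD := mk_mem_Dset_induce_compl_singleton_iff hM hu
  constructor
  · rintro ⟨hnD, hnA⟩
    refine ⟨fun p hp => hnD (hD.mpr ⟨p, hp⟩), fun q hq => ?_⟩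
    exact (mk_mem_Dset_or_mk_mem_Aset_of_isBalancedPath hM hu hq).elim hnD hnA
  · rintro ⟨hsat, hbal⟩
    refine ⟨fun h => ?_, fun h => ?_⟩
    · obtain ⟨p, hp⟩ := hD.mp h
      exact hsat p hp
    · rcases exists_isSaturatedPath_or_isBalancedPath_of_mk_mem_Aset_induce hM hu h with
        ⟨p, hp⟩ | ⟨q, hq⟩
      exacts [hsat p hp, hbal q hq]
end

section
/- Let G be a saturated factorizable graph, H a factor-connected component of G, and u, v ∈ V(H) with u ≠ v such that G − u − v is not factorizable. Then uv ∈ E(G). -/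
open SimpleGraph

variable {V : Type*}

/-!
If `u` and `v` were not adjacent, saturation would give `G + uv` more perfect matchings than
`G`. But a perfect matching of `G + uv` avoiding `uv` is one of `G`, and one containing `uv`
restricts to a perfect matching of `G - u - v`, which does not exist. So the two graphs have
the same perfect matchings, a contradiction.
-/

namespace IsPerfectMatchingSet

variable {G H : SimpleGraph V} {M : Set (Sym2 V)}

theorem eq_of_mem_of_mem (hM : IsPerfectMatchingSet G M) {x : V} {e f : Sym2 V}
    (he : e ∈ M) (hf : f ∈ M) (hxe : x ∈ e) (hxf : x ∈ f) : e = f :=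
  (hM.2 x).unique ⟨he, hxe⟩ ⟨hf, hxf⟩

theorem mono (hM : IsPerfectMatchingSet G M) (hGH : G ≤ H) : IsPerfectMatchingSet H M :=
  ⟨hM.1.trans (edgeSet_mono hGH), hM.2⟩

theorem of_sup_fromEdgeSet_singleton {e : Sym2 V}
    (hM : IsPerfectMatchingSet (G ⊔ fromEdgeSet {e}) M) (he : e ∉ M) :
    IsPerfectMatchingSet G M := by
  refine ⟨fun f hf => ?_, hM.2⟩
  rcases (edgeSet_sup G _ ▸ hM.1 hf : f ∈ G.edgeSet ∪ (fromEdgeSet {e}).edgeSet) with hG | hfe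
  · exact hG
  · rw [edgeSet_fromEdgeSet] at hfe
    exact absurd (hfe.1 ▸ hf) he

theorem factorizable_induce_compl_pair {u v : V} (hM : IsPerfectMatchingSet G M)
    (huv : s(u, v) ∈ M) : Factorizable (G.induce ({u, v}ᶜ : Set V)) := by
  have hmeet : ∀ f ∈ M, ∀ x ∈ f, x = u ∨ x = v → f = s(u, v) := by
    rintro f hf x hxf (rfl | rfl)
    · exact hM.eq_of_mem_of_mem hf huv hxf (Sym2.mem_mk_left _ _)
    · exact hM.eq_of_mem_of_mem hf huv hxf (Sym2.mem_mk_right _ _)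
  refine ⟨{e | Sym2.map Subtype.val e ∈ M}, fun e he => ?_, fun w => ?_⟩
  · induction e with
    | _ a b => exact hM.1 (by simpa [Sym2.map_mk] using he)
  · obtain ⟨f, ⟨hfM, hwf⟩, hfuniq⟩ := hM.2 w.val
    obtain ⟨x, rfl⟩ := Sym2.mem_iff_exists.mp hwf
    have hx : x ∈ ({u, v}ᶜ : Set V) := by
      intro hxuv
      rw [hmeet _ hfM x (Sym2.mem_mk_right _ _) hxuv] at hwf
      exact w.2 (by simpa using hwf)
    refine ⟨s(w, ⟨x, hx⟩), ⟨by simpa [Sym2.map_mk] using hfM, Sym2.mem_mk_left _ _⟩, ?_⟩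
    rintro e ⟨heM, hwe⟩
    apply Sym2.map.injective Subtype.val_injective
    rw [hfuniq _ ⟨heM, Sym2.mem_map.mpr ⟨w, hwe, rfl⟩⟩, Sym2.map_mk]

end IsPerfectMatchingSet

theorem induce_compl_pair_sup_fromEdgeSet (G : SimpleGraph V) (u v : V) :
    (G ⊔ fromEdgeSet {s(u, v)}).induce ({u, v}ᶜ : Set V) = G.induce ({u, v}ᶜ : Set V) := by
  ext a b
  have ha := a.2
  simp only [Set.mem_compl_iff, Set.mem_insert_iff, Set.mem_singleton_iff, not_or] at ha
  simp [ha.1, ha.2]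

theorem stmt13_general (G : SimpleGraph V) (hG : Saturated G) (u v : V)
    (hne : u ≠ v)
    (h : ¬ Factorizable (G.induce ({u, v}ᶜ : Set V))) :
    G.Adj u v := by
  by_contra hnadj
  have hsame : {N | IsPerfectMatchingSet G N} =
      {N | IsPerfectMatchingSet (G ⊔ fromEdgeSet {s(u, v)}) N} := by
    ext N
    refine ⟨fun hN => hN.mono le_sup_left, fun hN => hN.of_sup_fromEdgeSet_singleton ?_⟩
    intro huv
    apply h
    rw [← induce_compl_pair_sup_fromEdgeSet]
    exact hN.factorizable_induce_compl_pair huv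
  exact (hG.2 u v hne hnadj).ne (congrArg Set.ncard hsame)

theorem stmt13 [Finite V] (G : SimpleGraph V) (hG : Saturated G) (u v : V)
    (hfc : SameFC G u v) (hne : u ≠ v)
    (h : ¬ Factorizable (G.induce ({u, v}ᶜ : Set V))) :
    G.Adj u v :=
  stmt13_general G hG u v hne h
end
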